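/- For every f ∈ 𝔉 on Ω_{n²} and every density matrix ρ = (ρ_ij) on ℂ^n, the entanglement of assistance of the Schmidt correlated state ρ_mc = Σ_{i,j} ρ_ij |ii⟩⟨jj| equals its coherence of assistance with respect to the product basis: E_a(ρ_mc) = C_a(ρ_mc). -/

import Mathlib

open Matrix
open scoped ComplexOrder

/-- The coefficient matrix of a vector `Ψ ∈ ℂ^n ⊗ ℂ^n` (identified with `ℂ^{n×n}`
via the standard product basis): `A i j = Ψ (i,j)`. -/
def coeffMatrix {n : ℕ} (Ψ : Fin n × Fin n → ℂ) : Matrix (Fin n) (Fin n) ℂ :=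
  Matrix.of fun i j => Ψ (i, j)

/-- The Schmidt correlated state `ρ_mc = Σ_{i,j} ρ_ij |ii⟩⟨jj|` on `ℂ^n ⊗ ℂ^n`
associated to a matrix `ρ = (ρ_ij)` on `ℂ^n`. -/
def schmidtCorrelated {n : ℕ} (ρ : Matrix (Fin n) (Fin n) ℂ) :
    Matrix (Fin n × Fin n) (Fin n × Fin n) ℂ :=
  Matrix.of fun a b => if a.1 = a.2 ∧ b.1 = b.2 then ρ a.1 b.1 else 0

/-- The set of values `Σ_k p_k F(ψ_k)` over all pure state decompositions
`ρ = Σ_k p_k ψ_k ψ_k†` of `ρ` (weights `p_k ≥ 0` summing to `1`, unit vectors `ψ_k`).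
Its supremum is the least concave majorant (assistance) extension of `F`, and
its infimum is the convex roof extension of `F`. -/
def pureDecompVals {ι : Type*} [Fintype ι] (F : (ι → ℂ) → ℝ)
    (ρ : Matrix ι ι ℂ) : Set ℝ :=
  { x | ∃ (m : ℕ) (p : Fin m → ℝ) (ψ : Fin m → ι → ℂ),
      (∀ k, 0 ≤ p k) ∧ (∑ k, p k = 1) ∧
      (∀ k, ∑ i, ‖ψ k i‖ ^ 2 = 1) ∧
      ρ = ∑ k, (p k : ℂ) • Matrix.vecMulVec (ψ k) (star (ψ k)) ∧
      x = ∑ k, p k * F (ψ k) }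

/-!
Every vector `Ψ_k` with `p_k > 0` in a pure state decomposition of `ρ_mc` vanishes wherever the
diagonal `ρ_mc(a,a) = Σ_k p_k |Ψ_k(a)|²` does, i.e. off the pairs `|ii⟩`. Its coefficient matrix
`A` is then diagonal, so the eigenvalues of `A A†` are the numbers `|Ψ_ii|²`, and the padded
spectrum is a permutation of `(|Ψ_ij|²)`. Permutation invariance of `f` gives `E_f(Ψ_k) =
C_f(Ψ_k)`, so both suprema run over the same set of values.
-/

lemma Equiv.Perm.exists_eq_comp_of_map_univ_eq {ι α : Type*} [Fintype ι] {a b : ι → α}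
    (h : Multiset.map a Finset.univ.val = Multiset.map b Finset.univ.val) :
    ∃ σ : Equiv.Perm ι, a = b ∘ σ := by
  classical
  have hcard (v : α) : Fintype.card {x // a x = v} = Fintype.card {x // b x = v} := by
    simpa [Fintype.card_subtype, Multiset.count_map, eq_comm, Finset.card, Finset.filter_val] using
      congrArg (Multiset.count v) h
  let e (v : α) : {x // a x = v} ≃ {x // b x = v} := Fintype.equivOfCardEq (hcard v)
  refine ⟨(Equiv.sigmaFiberEquiv a).symm.trans
    ((Equiv.sigmaCongrRight e).trans (Equiv.sigmaFiberEquiv b)), funext fun x => ?_⟩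
  exact ((e (a x)) ⟨x, rfl⟩).2.symm

lemma Matrix.IsHermitian.exists_perm_eigenvalues_eq_of_eq_diagonal {𝕜 n : Type*} [RCLike 𝕜]
    [Fintype n] [DecidableEq n] {A : Matrix n n 𝕜} (hA : A.IsHermitian) {w : n → ℝ}
    (h : A = diagonal fun i => (w i : 𝕜)) :
    ∃ σ : Equiv.Perm n, hA.eigenvalues = w ∘ σ := by
  have hroots := hA.roots_charpoly_eq_eigenvalues
  rw [show A.charpoly = _ from h ▸ charpoly_diagonal _, Polynomial.roots_prod _ _
    (Finset.prod_ne_zero_iff.mpr fun i _ => Polynomial.X_sub_C_ne_zero _)] at hroots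
  refine Equiv.Perm.exists_eq_comp_of_map_univ_eq
    (Multiset.map_injective (RCLike.ofReal_injective (K := 𝕜)) ?_)
  simpa [Multiset.map_map] using hroots.symm

lemma sum_smul_vecMulVec_star_apply_self {ι : Type*} [Fintype ι] {m : ℕ} (p : Fin m → ℝ)
    (ψ : Fin m → ι → ℂ) (i : ι) :
    (∑ k, (p k : ℂ) • vecMulVec (ψ k) (star (ψ k))) i i = ((∑ k, p k * ‖ψ k i‖ ^ 2 : ℝ) : ℂ) := by
  simp [Matrix.sum_apply, vecMulVec_apply, Complex.mul_conj, Complex.normSq_eq_norm_sq]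

lemma eq_zero_of_sum_smul_vecMulVec_star_apply_self_eq_zero {ι : Type*} [Fintype ι] {m : ℕ}
    {p : Fin m → ℝ} (hp : ∀ k, 0 ≤ p k) {ψ : Fin m → ι → ℂ} {i : ι}
    (h : (∑ k, (p k : ℂ) • vecMulVec (ψ k) (star (ψ k))) i i = 0) {k : Fin m} (hk : 0 < p k) :
    ψ k i = 0 := by
  rw [sum_smul_vecMulVec_star_apply_self, Complex.ofReal_eq_zero,
    Finset.sum_eq_zero_iff_of_nonneg fun k _ => mul_nonneg (hp k) (by positivity)] at h
  simpa [hk.ne'] using h k (Finset.mem_univ k)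

lemma pureDecompVals_congr {ι : Type*} [Fintype ι] {F G : (ι → ℂ) → ℝ} {ρ : Matrix ι ι ℂ}
    (h : ∀ ψ : ι → ℂ, ∑ i, ‖ψ i‖ ^ 2 = 1 → (∀ i, ρ i i = 0 → ψ i = 0) → F ψ = G ψ) :
    pureDecompVals F ρ = pureDecompVals G ρ := by
  ext x
  constructor <;>
  · rintro ⟨m, p, ψ, hp, hp1, hψ, rfl, rfl⟩
    refine ⟨m, p, ψ, hp, hp1, hψ, rfl, Finset.sum_congr rfl fun k _ => ?_⟩
    rcases (hp k).eq_or_lt with hk | hk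
    · simp [← hk]
    · rw [h (ψ k) (hψ k) fun i hi =>
        eq_zero_of_sum_smul_vecMulVec_star_apply_self_eq_zero hp hi hk]

lemma schmidtCorrelated_apply_self_of_ne {n : ℕ} (ρ : Matrix (Fin n) (Fin n) ℂ)
    {a : Fin n × Fin n} (ha : a.1 ≠ a.2) : schmidtCorrelated ρ a a = 0 := by
  simp [schmidtCorrelated, ha]

lemma coeffMatrix_eq_diagonal {n : ℕ} {Ψ : Fin n × Fin n → ℂ}
    (hΨ : ∀ a : Fin n × Fin n, a.1 ≠ a.2 → Ψ a = 0) :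
    coeffMatrix Ψ = diagonal fun i => Ψ (i, i) := by
  ext i j
  rcases eq_or_ne i j with rfl | hij
  · simp [coeffMatrix]
  · simp [coeffMatrix, hij, hΨ (i, j) hij]

/-- The vector `(λ_1,…,λ_n,0,…,0)` of `E_f(Ψ)`, with the eigenvalues of `A A†` placed on the
diagonal of `Fin n × Fin n`. -/
noncomputable def paddedSchmidtSpectrum {n : ℕ} (Ψ : Fin n × Fin n → ℂ) : Fin n × Fin n → ℝ :=
  fun a => if a.1 = a.2 then
    (isHermitian_mul_conjTranspose_self (coeffMatrix Ψ)).eigenvalues a.1 else 0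

lemma exists_perm_paddedSchmidtSpectrum_eq {n : ℕ} {Ψ : Fin n × Fin n → ℂ}
    (hΨ : ∀ a : Fin n × Fin n, a.1 ≠ a.2 → Ψ a = 0) :
    ∃ σ : Equiv.Perm (Fin n × Fin n), paddedSchmidtSpectrum Ψ = (fun a => ‖Ψ a‖ ^ 2) ∘ σ := by
  have hAA : coeffMatrix Ψ * (coeffMatrix Ψ)ᴴ = diagonal fun i => ((‖Ψ (i, i)‖ ^ 2 : ℝ) : ℂ) := by
    rw [coeffMatrix_eq_diagonal hΨ, diagonal_conjTranspose, diagonal_mul_diagonal]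
    simp [Complex.mul_conj, Complex.normSq_eq_norm_sq]
  obtain ⟨σ, hσ⟩ :=
    (isHermitian_mul_conjTranspose_self _).exists_perm_eigenvalues_eq_of_eq_diagonal
      (w := fun i => ‖Ψ (i, i)‖ ^ 2) hAA
  refine ⟨Equiv.prodCongr σ σ, funext fun ⟨i, j⟩ => ?_⟩
  rcases eq_or_ne i j with rfl | hij
  · simp [paddedSchmidtSpectrum, hσ]
  · simp [paddedSchmidtSpectrum, hij, hΨ (σ i, σ j) (σ.injective.ne hij)]

theorem ea_eq_ca_on_schmidt_correlated_general
    {n : ℕ} (f : (Fin n × Fin n → ℝ) → ℝ)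
    (hsym : ∀ σ : Equiv.Perm (Fin n × Fin n), ∀ x ∈ stdSimplex ℝ (Fin n × Fin n),
      f (x ∘ σ) = f x)
    (ρ : Matrix (Fin n) (Fin n) ℂ) :
    sSup (pureDecompVals
        (fun Ψ => f fun a => if a.1 = a.2 then
          (Matrix.isHermitian_mul_conjTranspose_self (coeffMatrix Ψ)).eigenvalues a.1 else 0)
        (schmidtCorrelated ρ)) =
      sSup (pureDecompVals (fun Ψ => f fun a => ‖Ψ a‖ ^ 2)
        (schmidtCorrelated ρ)) := by
  congr 1
  refine pureDecompVals_congr fun Ψ hΨ hsupp => ?_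
  obtain ⟨σ, hσ⟩ := exists_perm_paddedSchmidtSpectrum_eq fun a ha =>
    hsupp a (schmidtCorrelated_apply_self_of_ne ρ ha)
  exact (congrArg f hσ).trans (hsym σ _ ⟨fun a => by positivity, hΨ⟩)

theorem ea_eq_ca_on_schmidt_correlated
    {n : ℕ} [NeZero n] (f : (Fin n × Fin n → ℝ) → ℝ)
    (hconc : ConcaveOn ℝ (stdSimplex ℝ (Fin n × Fin n)) f)
    (hsym : ∀ σ : Equiv.Perm (Fin n × Fin n), ∀ x ∈ stdSimplex ℝ (Fin n × Fin n),
      f (x ∘ σ) = f x)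
    (hzero : f (Pi.single (0, 0) 1) = 0)
    (ρ : Matrix (Fin n) (Fin n) ℂ) (hpsd : ρ.PosSemidef) (htr : ρ.trace = 1) :
    sSup (pureDecompVals
        (fun Ψ => f fun a => if a.1 = a.2 then
          (Matrix.isHermitian_mul_conjTranspose_self (coeffMatrix Ψ)).eigenvalues a.1 else 0)
        (schmidtCorrelated ρ)) =
      sSup (pureDecompVals (fun Ψ => f fun a => ‖Ψ a‖ ^ 2)
        (schmidtCorrelated ρ)) :=
  ea_eq_ca_on_schmidt_correlated_general f hsym ρ
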